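/- Let S and T be finite-dimensional operator systems of the same dimension n. Then there exists a surjective ucp map φ : S → T. -/

import Mathlib

open scoped ComplexOrder TensorProduct

noncomputable section

/-- A family of matrix cones over `V`, one in each matrix level `Mₙ(V)`. -/
def ConeFam (V : Type*) : Type _ :=
  ∀ n : ℕ, Set (Matrix (Fin n) (Fin n) V)

/-- Entrywise application of a linear map to a matrix (the `n`-th amplification). -/
def mmap {V W : Type*} [AddCommGroup V] [Module ℂ V] [AddCommGroup W] [Module ℂ W]
    {n : ℕ} (φ : V →ₗ[ℂ] W) (M : Matrix (Fin n) (Fin n) V) : Matrix (Fin n) (Fin n) W :=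
  M.map fun v => φ v

/-- Scalar congruence `A⋆ M A` of a `V`-valued matrix by a scalar matrix. -/
def matCongr {V : Type*} [AddCommGroup V] [Module ℂ V] {m n : ℕ}
    (A : Matrix (Fin m) (Fin n) ℂ) (M : Matrix (Fin m) (Fin m) V) :
    Matrix (Fin n) (Fin n) V :=
  Matrix.of fun i j => ∑ k, ∑ l, (star (A k i) * A l j) • M k l

/-- The diagonal matrix with constant diagonal entry `e`. -/
def unitMat {V : Type*} [AddCommGroup V] [Module ℂ V] (e : V) (n : ℕ) :
    Matrix (Fin n) (Fin n) V :=
  Matrix.of fun i j => if i = j then e else 0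

/-- An abstract operator system: a matrix ordered `*`-vector space together with an
Archimedean matrix order unit (Choi–Effros axioms). -/
structure OSStruct (V : Type*) [AddCommGroup V] [Module ℂ V]
    [StarAddMonoid V] [StarModule ℂ V] where
  pos : ConeFam V
  unit : V
  unit_sa : star unit = unit
  pos_sa : ∀ {n : ℕ} {M : Matrix (Fin n) (Fin n) V}, M ∈ pos n → M.conjTranspose = M
  pos_add : ∀ {n : ℕ} {M N : Matrix (Fin n) (Fin n) V}, M ∈ pos n → N ∈ pos n → M + N ∈ pos n
  pos_smul : ∀ {n : ℕ} (r : ℝ) {M : Matrix (Fin n) (Fin n) V},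
      0 ≤ r → M ∈ pos n → (r : ℂ) • M ∈ pos n
  pos_strict : ∀ {n : ℕ} {M : Matrix (Fin n) (Fin n) V}, M ∈ pos n → -M ∈ pos n → M = 0
  pos_congr : ∀ {m n : ℕ} (A : Matrix (Fin m) (Fin n) ℂ) {M : Matrix (Fin m) (Fin m) V},
      M ∈ pos m → matCongr A M ∈ pos n
  unit_pos : ∀ n, unitMat unit n ∈ pos n
  orderUnit : ∀ {n : ℕ} (M : Matrix (Fin n) (Fin n) V), M.conjTranspose = M →
      ∃ r : ℝ, 0 < r ∧ (r : ℂ) • unitMat unit n + M ∈ pos n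
  archimedean : ∀ {n : ℕ} (M : Matrix (Fin n) (Fin n) V),
      (∀ ε : ℝ, 0 < ε → (ε : ℂ) • unitMat unit n + M ∈ pos n) → M ∈ pos n

section Maps
variable {V W : Type*} [AddCommGroup V] [Module ℂ V] [AddCommGroup W] [Module ℂ W]

/-- `k`-positivity of a linear map with respect to given matrix cone families. -/
def osKPos (C : ConeFam V) (D : ConeFam W) (k : ℕ) (φ : V →ₗ[ℂ] W) : Prop :=
  ∀ M ∈ C k, mmap φ M ∈ D k

/-- Complete positivity. -/
def osCP (C : ConeFam V) (D : ConeFam W) (φ : V →ₗ[ℂ] W) : Prop :=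
  ∀ k, osKPos C D k φ

/-- Unital complete positivity. -/
def osUCP (C : ConeFam V) (e : V) (D : ConeFam W) (f : W) (φ : V →ₗ[ℂ] W) : Prop :=
  osCP C D φ ∧ φ e = f

/-- Complete order embedding. -/
def osCOEmbedding (C : ConeFam V) (D : ConeFam W) (φ : V →ₗ[ℂ] W) : Prop :=
  Function.Injective φ ∧ osCP C D φ ∧
    ∀ (n : ℕ) (M : Matrix (Fin n) (Fin n) V), mmap φ M ∈ D n → M ∈ C n

/-- Operator system quotient map: a surjective completely positive map such that the
induced map on the quotient by its kernel is a complete order isomorphism, expressed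
via the standard `ε`-lifting characterisation of positive matrices. -/
def osQuotientMap (C : ConeFam V) (D : ConeFam W) (f : W) (φ : V →ₗ[ℂ] W) : Prop :=
  Function.Surjective φ ∧ osCP C D φ ∧
    ∀ (n : ℕ), ∀ N ∈ D n, ∀ ε : ℝ, 0 < ε →
      ∃ M ∈ C n, mmap φ M = N + (ε : ℂ) • unitMat f n

/-- Positivity of a single element (as a `1 × 1` matrix). -/
def posElem (C : ConeFam V) (v : V) : Prop :=
  (Matrix.of (fun _ _ => v) : Matrix (Fin 1) (Fin 1) V) ∈ C 1

/-- A state: a unital positive linear functional. -/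
def osState (C : ConeFam V) (e : V) (f : Module.Dual ℂ V) : Prop :=
  f e = 1 ∧ ∀ v, posElem C v → 0 ≤ f v

/-- A faithful state. -/
def osFaithfulState (C : ConeFam V) (e : V) (f : Module.Dual ℂ V) : Prop :=
  osState C e f ∧ ∀ v, posElem C v → f v = 0 → v = 0

end Maps

section Dual
variable {V : Type*} [AddCommGroup V] [Module ℂ V]

/-- Flatten a matrix of scalar matrices to a scalar matrix over the product index. -/
def blockify {n : ℕ} {ι : Type*} (M : Matrix (Fin n) (Fin n) (Matrix ι ι ℂ)) :
    Matrix (Fin n × ι) (Fin n × ι) ℂ :=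
  Matrix.of fun p q => M p.1 q.1 p.2 q.2

/-- The matrix-valued map associated with a matrix of functionals. -/
def matValued {n : ℕ} (F : Matrix (Fin n) (Fin n) (Module.Dual ℂ V)) :
    V →ₗ[ℂ] Matrix (Fin n) (Fin n) ℂ where
  toFun v := Matrix.of fun i j => F i j v
  map_add' a b := by ext i j; simp
  map_smul' c a := by ext i j; simp

/-- Complete positivity of a map into a matrix algebra `Mₖ(ℂ)`. -/
def CPIntoMat (C : ConeFam V) {k : ℕ} (φ : V →ₗ[ℂ] Matrix (Fin k) (Fin k) ℂ) : Prop :=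
  ∀ (n : ℕ), ∀ M ∈ C n, (blockify (mmap φ M)).PosSemidef

/-- The dual matrix ordering on `Sᵈ`: a matrix of functionals is positive iff the
associated matrix-valued map is completely positive. -/
def osDualCone (C : ConeFam V) : ConeFam (Module.Dual ℂ V) :=
  fun _ => { F | CPIntoMat C (matValued F) }

/-- The induced (subsystem) matrix ordering on a subspace. -/
def osSubCone (C : ConeFam V) (S₀ : Submodule ℂ V) : ConeFam S₀ :=
  fun n => { M | mmap S₀.subtype M ∈ C n }

end Dual

/-- A null subspace: a `*`-closed subspace containing no nonzero positive element. -/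
def IsNullSubspace {V : Type*} [AddCommGroup V] [Module ℂ V] [StarAddMonoid V]
    (C : ConeFam V) (J : Submodule ℂ V) : Prop :=
  (∀ v ∈ J, star v ∈ J) ∧ ∀ v ∈ J, posElem C v → v = 0

/-- The canonical involution on the dual space: `f⋆ (s) = conj (f (s⋆))`. -/
def dstar {V : Type*} [AddCommGroup V] [Module ℂ V] [StarAddMonoid V] [StarModule ℂ V]
    (f : Module.Dual ℂ V) : Module.Dual ℂ V where
  toFun v := starRingEnd ℂ (f (star v))
  map_add' a b := by simp
  map_smul' c a := by
    simp only [star_smul, LinearMap.map_smul, smul_eq_mul, map_mul, RingHom.id_apply,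
      starRingEnd_apply, star_star]

section TensorDefs
variable {V W : Type*} [AddCommGroup V] [Module ℂ V] [AddCommGroup W] [Module ℂ W]

/-- Kronecker product of scalar matrices. -/
def osKron {k m : ℕ} (X : Matrix (Fin k) (Fin k) ℂ) (Y : Matrix (Fin m) (Fin m) ℂ) :
    Matrix (Fin k × Fin m) (Fin k × Fin m) ℂ :=
  Matrix.of fun p q => X p.1 q.1 * Y p.2 q.2

/-- The map `φ ⊗ ψ : V ⊗ W → M_k ⊗ M_m = M_{km}`. -/
def osFuse {k m : ℕ} (φ : V →ₗ[ℂ] Matrix (Fin k) (Fin k) ℂ)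
    (ψ : W →ₗ[ℂ] Matrix (Fin m) (Fin m) ℂ) :
    V ⊗[ℂ] W →ₗ[ℂ] Matrix (Fin k × Fin m) (Fin k × Fin m) ℂ :=
  TensorProduct.lift (LinearMap.mk₂ ℂ (fun v w => osKron (φ v) (ψ w))
    (fun v v' w => by ext p q; simp [osKron, add_mul])
    (fun c v w => by ext p q; simp [osKron, smul_eq_mul]; ring)
    (fun v w w' => by ext p q; simp [osKron, mul_add])
    (fun c v w => by ext p q; simp [osKron, smul_eq_mul]; ring))

/-- The minimal operator system tensor cone. -/
def osMin (C : ConeFam V) (e : V) (D : ConeFam W) (f : W) : ConeFam (V ⊗[ℂ] W) :=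
  fun n => { U | ∀ (k m : ℕ) (φ : V →ₗ[ℂ] Matrix (Fin k) (Fin k) ℂ)
      (ψ : W →ₗ[ℂ] Matrix (Fin m) (Fin m) ℂ),
      CPIntoMat C φ → φ e = 1 → CPIntoMat D ψ → ψ f = 1 →
      (blockify (mmap (osFuse φ ψ) U)).PosSemidef }

/-- The elementary tensor `P ⊗ Q` of a `V`-valued and a `W`-valued matrix. -/
def tensorElemMat {k m : ℕ} (P : Matrix (Fin k) (Fin k) V) (Q : Matrix (Fin m) (Fin m) W) :
    Matrix (Fin (k * m)) (Fin (k * m)) (V ⊗[ℂ] W) :=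
  Matrix.of fun i j =>
    P (finProdFinEquiv.symm i).1 (finProdFinEquiv.symm j).1 ⊗ₜ[ℂ]
      Q (finProdFinEquiv.symm i).2 (finProdFinEquiv.symm j).2

/-- The cones `Dₙ^max` of the maximal tensor product. -/
def osMaxD (C : ConeFam V) (D : ConeFam W) : ConeFam (V ⊗[ℂ] W) :=
  fun n => { U | ∃ (k m : ℕ) (P : Matrix (Fin k) (Fin k) V) (Q : Matrix (Fin m) (Fin m) W)
      (A : Matrix (Fin (k * m)) (Fin n) ℂ),
      P ∈ C k ∧ Q ∈ D m ∧ U = matCongr A (tensorElemMat P Q) }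

/-- The maximal operator system tensor cone (Archimedeanization of `Dₙ^max`). -/
def osMax (C : ConeFam V) (e : V) (D : ConeFam W) (f : W) : ConeFam (V ⊗[ℂ] W) :=
  fun n => { U | ∀ ε : ℝ, 0 < ε → (ε : ℂ) • unitMat (e ⊗ₜ[ℂ] f) n + U ∈ osMaxD C D n }

end TensorDefs

/-- The canonical matrix ordering of a C*-algebra: `M ≥ 0` iff `M = N⋆ N`. -/
def cstarPos (A : Type*) [Ring A] [StarRing A] [Algebra ℂ A] : ConeFam A :=
  fun n => { M | ∃ N : Matrix (Fin n) (Fin n) A, M = N.conjTranspose * N }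

/-- The (local) lifting property of a finite dimensional operator system: every ucp map
into a quotient C*-algebra `A/I` (presented by a surjective unital `*`-homomorphism)
admits a completely positive lift. -/
def osLiftingProperty {V : Type*} [AddCommGroup V] [Module ℂ V] (C : ConeFam V) (e : V) :
    Prop :=
  ∀ (A B : Type) [CStarAlgebra A] [CStarAlgebra B] (q : A →⋆ₐ[ℂ] B),
    Function.Surjective (⇑q) →
    ∀ φ : V →ₗ[ℂ] B, osUCP C e (cstarPos B) 1 φ →
      ∃ ψ : V →ₗ[ℂ] A, osCP C (cstarPos A) ψ ∧ q.toAlgHom.toLinearMap ∘ₗ ψ = φ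

/-- Exactness of a (finite dimensional) operator system: for every quotient of C*-algebras
the natural map `(S ⊗_min A)/(S ⊗ I) → S ⊗_min (A/I)` is a complete order isomorphism. -/
def osExact {V : Type*} [AddCommGroup V] [Module ℂ V] (C : ConeFam V) (e : V) : Prop :=
  ∀ (A B : Type) [CStarAlgebra A] [CStarAlgebra B] (q : A →⋆ₐ[ℂ] B),
    Function.Surjective (⇑q) →
    ∀ (n : ℕ) (U : Matrix (Fin n) (Fin n) (V ⊗[ℂ] B)),
      U ∈ osMin C e (cstarPos B) (1 : B) n ↔
        ∀ ε : ℝ, 0 < ε → ∃ P ∈ osMin C e (cstarPos A) (1 : A) n,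
          mmap (LinearMap.lTensor V q.toAlgHom.toLinearMap) P
            = U + (ε : ℂ) • unitMat (e ⊗ₜ[ℂ] (1 : B)) n

/-- Kirchberg's local lifting property (LLP) of a unital C*-algebra. -/
def cstarLLP (U : Type*) [CStarAlgebra U] : Prop :=
  ∀ (A B : Type) [CStarAlgebra A] [CStarAlgebra B] (q : A →⋆ₐ[ℂ] B),
    Function.Surjective (⇑q) →
    ∀ (θ : U →ₗ[ℂ] B), osUCP (cstarPos U) 1 (cstarPos B) 1 θ →
    ∀ (F : Submodule ℂ U), FiniteDimensional ℂ F → (∀ x ∈ F, star x ∈ F) →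
    ∀ (h1 : (1 : U) ∈ F),
      ∃ ψ : (F : Type _) →ₗ[ℂ] A,
        osUCP (osSubCone (cstarPos U) F) ⟨1, h1⟩ (cstarPos A) 1 ψ ∧
        q.toAlgHom.toLinearMap ∘ₗ ψ = θ ∘ₗ F.subtype

end

/-!
Positive functionals separate the self-adjoint elements of an operator system: given a
self-adjoint `a` outside the cone, the M. Riesz extension theorem, applied on the line through
the order unit to the cone generated by the positive elements and `-(a + ε e)`, yields a state
that is negative on `a`. Hence in finite dimensions the states span `Sᵈ` and the positive
elements span `T`, so `∑ᵢ δᵢ ⊗ tᵢ` for a basis of states `δᵢ` and a basis of positive `tᵢ` is an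
injective completely positive map `ψ : S → T`, each rank-one map `δ ⊗ t` being completely
positive. Scale `ψ` so that `e - ψ e ≥ 0`; adding `δ ⊗ (e - ψ e)` for a state `δ` with
`δ (ψ⁻¹ e) ≠ 0` makes it unital and keeps it injective, hence bijective by dimension count.
-/

open ComplexStarModule ComplexConjugate Module

theorem PointedCone.exists_dual_nonneg_of_notMem {E : Type*} [AddCommGroup E] [Module ℝ E]
    (K : PointedCone ℝ E) {e : E} (he : e ∈ K) (hunit : ∀ x, ∃ r : ℝ, r • e + x ∈ K)
    {b : E} (hb : b ∉ K) :
    ∃ g : Dual ℝ E, g e = 1 ∧ (∀ x ∈ K, 0 ≤ g x) ∧ g b ≤ 0 := by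
  have he₀ : e ≠ 0 := by
    rintro rfl
    obtain ⟨r, hr⟩ := hunit b
    exact hb (by simpa using hr)
  let K' : PointedCone ℝ E :=
    { carrier := {x | ∃ s : ℝ, 0 ≤ s ∧ x + s • b ∈ K}
      zero_mem' := ⟨0, le_rfl, by simp⟩
      add_mem' := by
        rintro x y ⟨s, hs, hx⟩ ⟨t, ht, hy⟩
        exact ⟨s + t, add_nonneg hs ht, by convert K.add_mem hx hy using 1; module⟩
      smul_mem' := by
        rintro ⟨c, hc⟩ x ⟨s, hs, hx⟩
        refine ⟨c * s, mul_nonneg hc hs, ?_⟩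
        convert K.smul_mem hc hx using 1
        simp only [Nonneg.mk_smul, smul_add, smul_smul] }
  have hK' (x : E) (hx : x ∈ K) : x ∈ K' := ⟨0, le_rfl, by simpa using hx⟩
  let f : E →ₗ.[ℝ] ℝ := LinearPMap.mkSpanSingleton e 1 he₀
  have hf_nonneg (x : f.domain) (hx : (x : E) ∈ K') : 0 ≤ f x := by
    obtain ⟨_, hx'⟩ := x
    obtain ⟨r, rfl⟩ := Submodule.mem_span_singleton.1 hx'
    obtain ⟨s, hs, hxs : r • e + s • b ∈ K⟩ := hx
    simp only [f, LinearPMap.mkSpanSingleton'_apply, RingHom.id_apply, smul_eq_mul, mul_one]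
    by_contra! hr
    have hsb : s • b ∈ K := by
      convert K.add_mem hxs (K.smul_mem (by linarith : 0 ≤ -r) he) using 1
      module
    rcases hs.lt_or_eq with hs | rfl
    · have := K.smul_mem (inv_nonneg.2 hs.le) hsb
      exact hb (by simpa [smul_smul, inv_mul_cancel₀ hs.ne'] using this)
    -- `r • e ∈ K` with `r < 0`, so `K` contains the whole line `ℝ e`, hence `b`
    have hneg : -e ∈ K := by
      convert K.smul_mem (by simp [hr.le] : 0 ≤ -r⁻¹) hxs using 1
      simp [smul_smul, inv_mul_cancel₀ hr.ne]
    obtain ⟨r', hr'⟩ := hunit b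
    have hr'e : -r' • e ∈ K := by
      rcases le_total r' 0 with h | h
      · simpa using K.smul_mem (by linarith : 0 ≤ -r') he
      · simpa using K.smul_mem h hneg
    exact hb (by simpa using K.add_mem hr' hr'e)
  have hf_dense (y : E) : ∃ x : f.domain, (x : E) + y ∈ K' := by
    obtain ⟨r, hr⟩ := hunit y
    exact ⟨⟨r • e, Submodule.smul_mem _ _ (Submodule.mem_span_singleton_self e)⟩, hK' _ hr⟩
  obtain ⟨g, hgf, hg⟩ := riesz_extension K' f hf_nonneg hf_dense
  refine ⟨g, ?_, fun x hx => hg x (hK' x hx), ?_⟩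
  · exact (hgf _).trans (LinearPMap.mkSpanSingleton_apply ℝ ℝ he₀ 1)
  · simpa using hg (-b) ⟨1, zero_le_one, by simp⟩

theorem Module.Basis.exists_forall_mem_of_span_eq_top {K M : Type*} [DivisionRing K]
    [AddCommGroup M] [Module K M] [FiniteDimensional K M] {n : ℕ} (hn : finrank K M = n)
    {s : Set M} (hs : Submodule.span K s = ⊤) : ∃ b : Basis (Fin n) K M, ∀ i, b i ∈ s := by
  let b := Basis.ofSpan hs.ge
  refine ⟨b.reindex (b.indexEquiv (finBasisOfFinrankEq K M hn)), fun i => ?_⟩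
  rw [Basis.reindex_apply]
  exact Basis.ofSpan_subset hs.ge (Set.mem_range_self _)

section LinearAlgebra

variable {K V W : Type*} [Field K] [AddCommGroup V] [Module K V] [AddCommGroup W] [Module K W]

theorem LinearMap.injective_sum_smulRight {ι : Type*} [Fintype ι] (b : Basis ι K (Dual K V))
    {w : ι → W} (hw : LinearIndependent K w) :
    Function.Injective (∑ i, (b i).smulRight (w i) : V →ₗ[K] W) := by
  refine (injective_iff_map_eq_zero _).2 fun v hv => ?_
  have hbv : ∀ i, b i v = 0 := Fintype.linearIndependent_iff.1 hw _ (by simpa using hv)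
  have : Dual.eval K V v = 0 := b.ext fun i => by simpa using hbv i
  exact (forall_dual_apply_eq_zero_iff K v).1 fun φ => LinearMap.congr_fun this φ

theorem LinearMap.injective_add_smulRight {L : V →ₗ[K] W} (hL : Function.Injective L)
    {g : Dual K V} {x : V} (hx : 1 + g x ≠ 0) :
    Function.Injective (L + g.smulRight (L x)) := by
  refine (injective_iff_map_eq_zero _).2 fun v hv => ?_
  have h : v + g v • x = 0 := hL (by simpa using hv)
  have hgv : g v = 0 := by
    have := congrArg g h
    rw [map_add, map_smul, smul_eq_mul, map_zero, ← mul_one_add] at this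
    exact (mul_eq_zero.1 this).resolve_right hx
  simpa [hgv] using h

end LinearAlgebra

namespace OSStruct

variable {V : Type*} [AddCommGroup V] [Module ℂ V] [StarAddMonoid V] [StarModule ℂ V]
  (S : OSStruct V)

theorem mem_pos_one_iff {M : Matrix (Fin 1) (Fin 1) V} :
    M ∈ S.pos 1 ↔ posElem S.pos (M 0 0) := by
  have : M = Matrix.of fun _ _ => M 0 0 := by
    ext i j
    rw [Subsingleton.elim i 0, Subsingleton.elim j 0]
    rfl
  rw [posElem, ← this]

theorem posElem_unit : posElem S.pos S.unit := by
  simpa [mem_pos_one_iff, unitMat] using S.unit_pos 1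

variable {S}

theorem posElem_add {v w : V} (hv : posElem S.pos v) (hw : posElem S.pos w) :
    posElem S.pos (v + w) := by
  simpa [mem_pos_one_iff] using S.pos_add hv hw

theorem posElem_smul {r : ℝ} (hr : 0 ≤ r) {v : V} (hv : posElem S.pos v) :
    posElem S.pos (r • v) := by
  simpa [mem_pos_one_iff, Complex.coe_smul] using S.pos_smul r hr hv

variable (S) in
theorem posElem_zero : posElem S.pos (0 : V) := by
  simpa using posElem_smul le_rfl S.posElem_unit

theorem isSelfAdjoint_of_posElem {v : V} (hv : posElem S.pos v) : IsSelfAdjoint v := by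
  simpa [Matrix.conjTranspose, IsSelfAdjoint] using congrFun₂ (S.pos_sa hv) 0 0

theorem eq_zero_of_posElem_of_posElem_neg {v : V} (hv : posElem S.pos v)
    (hv' : posElem S.pos (-v)) : v = 0 := by
  simpa using congrFun₂ (S.pos_strict hv (by simpa [mem_pos_one_iff] using hv')) 0 0

theorem posElem_of_forall_posElem_smul_unit_add {v : V}
    (h : ∀ ε : ℝ, 0 < ε → posElem S.pos (ε • S.unit + v)) : posElem S.pos v := by
  refine S.archimedean _ fun ε hε => ?_
  simpa [mem_pos_one_iff, unitMat, Complex.coe_smul] using h ε hε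

theorem exists_posElem_smul_unit_add {a : V} (ha : IsSelfAdjoint a) :
    ∃ r : ℝ, 0 < r ∧ posElem S.pos (r • S.unit + a) := by
  obtain ⟨r, hr, h⟩ := S.orderUnit (Matrix.of fun _ _ => a) (by ext; simpa using ha.star_eq)
  rw [mem_pos_one_iff] at h
  exact ⟨r, hr, by simpa [unitMat, Complex.coe_smul] using h⟩

variable (S)

theorem unit_ne_zero [Nontrivial V] : S.unit ≠ 0 := by
  intro he
  have hsa (a : V) (ha : IsSelfAdjoint a) : a = 0 := by
    obtain ⟨_, _, h₁⟩ := exists_posElem_smul_unit_add (S := S) ha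
    obtain ⟨_, _, h₂⟩ := exists_posElem_smul_unit_add (S := S) ha.neg
    rw [he, smul_zero, zero_add] at h₁ h₂
    exact eq_zero_of_posElem_of_posElem_neg h₁ h₂
  obtain ⟨v, hv⟩ := exists_ne (0 : V)
  apply hv
  rw [← realPart_add_I_smul_imaginaryPart v, hsa _ (ℜ v).2, hsa _ (ℑ v).2, smul_zero, add_zero]

theorem span_posElem_eq_top : Submodule.span ℂ {v : V | posElem S.pos v} = ⊤ := by
  have hsa (a : V) (ha : IsSelfAdjoint a) : a ∈ Submodule.span ℂ {v : V | posElem S.pos v} := by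
    obtain ⟨r, hr, h⟩ := exists_posElem_smul_unit_add (S := S) ha
    rw [← add_sub_cancel_left (r • S.unit) a]
    exact Submodule.sub_mem _ (Submodule.subset_span h)
      (Submodule.subset_span (posElem_smul hr.le S.posElem_unit))
  refine Submodule.eq_top_iff'.2 fun v => ?_
  rw [← realPart_add_I_smul_imaginaryPart v]
  exact Submodule.add_mem _ (hsa _ (ℜ v).2) (Submodule.smul_mem _ _ (hsa _ (ℑ v).2))

variable {S} {f : Dual ℂ V}

theorem im_eq_zero_of_isSelfAdjoint (hf : ∀ v, posElem S.pos v → 0 ≤ f v) {a : V}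
    (ha : IsSelfAdjoint a) : (f a).im = 0 := by
  obtain ⟨r, hr, h⟩ := exists_posElem_smul_unit_add (S := S) ha
  have h₁ := Complex.nonneg_iff.1 (hf _ h)
  have h₂ := Complex.nonneg_iff.1 (hf _ (posElem_smul hr.le S.posElem_unit))
  have : f a = f (r • S.unit + a) - f (r • S.unit) := by simp
  rw [this, Complex.sub_im, ← h₁.2, ← h₂.2, sub_zero]

theorem map_star_eq_conj (hf : ∀ v, posElem S.pos v → 0 ≤ f v) (v : V) :
    f (star v) = conj (f v) := by
  have hre := im_eq_zero_of_isSelfAdjoint hf (ℜ v).2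
  have him := im_eq_zero_of_isSelfAdjoint hf (ℑ v).2
  rw [← realPart_add_I_smul_imaginaryPart v]
  simp only [star_add, star_smul, (ℜ v).2.star_eq, (ℑ v).2.star_eq, map_add, map_smul,
    smul_eq_mul, Complex.star_def, Complex.conj_I, map_mul]
  apply Complex.ext <;> simp [hre, him]

theorem map_realPart (hf : ∀ v, posElem S.pos v → 0 ≤ f v) (v : V) :
    f (ℜ v) = (f v).re := by
  rw [realPart_apply_coe, f.map_smul_of_tower, map_add, map_star_eq_conj hf,
    Complex.re_eq_add_conj, Complex.real_smul]
  push_cast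
  ring

theorem map_imaginaryPart (hf : ∀ v, posElem S.pos v → 0 ≤ f v) (v : V) :
    f (ℑ v) = (f v).im := by
  rw [← neg_neg (ℑ v), ← realPart_I_smul, NegMemClass.coe_neg, map_neg, map_realPart hf,
    map_smul]
  apply Complex.ext <;> simp

variable (S) in
def posCone : PointedCone ℝ (selfAdjoint V) where
  carrier := {x | posElem S.pos (x : V)}
  zero_mem' := S.posElem_zero
  add_mem' hx hy := posElem_add hx hy
  smul_mem' c x hx := by
    simpa [← Nonneg.coe_smul, selfAdjoint.val_smul] using posElem_smul c.2 hx

theorem exists_state_re_neg {a : V} (ha : IsSelfAdjoint a) (hna : ¬posElem S.pos a) :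
    ∃ f, osState S.pos S.unit f ∧ (f a).re < 0 := by
  obtain ⟨ε, hε, hεa⟩ : ∃ ε : ℝ, 0 < ε ∧ ¬posElem S.pos (ε • S.unit + a) := by
    by_contra! h
    exact hna (posElem_of_forall_posElem_smul_unit_add h)
  let e : selfAdjoint V := ⟨S.unit, S.unit_sa⟩
  obtain ⟨g, hge, hg, hgb⟩ := (posCone S).exists_dual_nonneg_of_notMem (e := e) S.posElem_unit
    (fun x => by obtain ⟨r, -, hr⟩ := exists_posElem_smul_unit_add x.2; exact ⟨r, hr⟩)
    (b := ε • e + ⟨a, ha⟩) hεa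
  let f : Dual ℂ V := Dual.extendRCLike (g ∘ₗ realPart)
  have hf (x : selfAdjoint V) : f x = g x := by
    simp [f, Dual.extendRCLike_apply]
  refine ⟨f, ⟨by simpa [hge] using hf e, fun v hv => ?_⟩, ?_⟩
  · simpa [hf ⟨v, isSelfAdjoint_of_posElem hv⟩] using hg _ hv
  · rw [hf ⟨a, ha⟩, Complex.ofReal_re]
    rw [map_add, map_smul, hge, smul_eq_mul, mul_one] at hgb
    linarith

theorem exists_state_apply_ne_zero {v : V} (hv : v ≠ 0) :
    ∃ f, osState S.pos S.unit f ∧ f v ≠ 0 := by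
  have hsa (a : V) (ha : IsSelfAdjoint a) (ha₀ : a ≠ 0) :
      ∃ f, osState S.pos S.unit f ∧ f a ≠ 0 := by
    by_cases hpos : posElem S.pos a
    · obtain ⟨f, hf, hfa⟩ := exists_state_re_neg ha.neg
        fun h => ha₀ (eq_zero_of_posElem_of_posElem_neg hpos h)
      refine ⟨f, hf, fun h => ?_⟩
      simp [h] at hfa
    · obtain ⟨f, hf, hfa⟩ := exists_state_re_neg ha hpos
      exact ⟨f, hf, fun h => by simp [h] at hfa⟩
  by_cases hre : (ℜ v : V) = 0
  · have him : (ℑ v : V) ≠ 0 := fun him => hv <| by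
      rw [← realPart_add_I_smul_imaginaryPart v, hre, him, smul_zero, add_zero]
    obtain ⟨f, hf, hfv⟩ := hsa _ (ℑ v).2 him
    exact ⟨f, hf, fun h => hfv (by simp [map_imaginaryPart hf.2, h])⟩
  · obtain ⟨f, hf, hfv⟩ := hsa _ (ℜ v).2 hre
    exact ⟨f, hf, fun h => hfv (by simp [map_realPart hf.2, h])⟩

variable (S) in
theorem span_states_eq_top [FiniteDimensional ℂ V] :
    Submodule.span ℂ {f | osState S.pos S.unit f} = ⊤ := by
  set W := Submodule.span ℂ {f | osState S.pos S.unit f}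
  have hW : W.dualCoannihilator = ⊥ := by
    refine (Submodule.eq_bot_iff _).2 fun v hv => ?_
    by_contra hv₀
    obtain ⟨f, hf, hfv⟩ := exists_state_apply_ne_zero hv₀
    exact hfv ((Submodule.mem_dualCoannihilator _).1 hv f (Submodule.subset_span hf))
  rw [← Subspace.dualCoannihilator_dualAnnihilator_eq (W := W), hW,
    Submodule.dualAnnihilator_bot]

end OSStruct

section CompletelyPositive

variable {V W : Type*} [AddCommGroup V] [Module ℂ V] [StarAddMonoid V] [StarModule ℂ V]
  [AddCommGroup W] [Module ℂ W] [StarAddMonoid W] [StarModule ℂ W]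
  {S : OSStruct V} {T : OSStruct W}

theorem OSStruct.zero_mem_pos (T : OSStruct W) (k : ℕ) :
    (0 : Matrix (Fin k) (Fin k) W) ∈ T.pos k := by
  simpa using T.pos_smul 0 le_rfl (T.unit_pos k)

theorem OSStruct.sum_mem_pos (T : OSStruct W) {k : ℕ} {ι : Type*} (s : Finset ι)
    {M : ι → Matrix (Fin k) (Fin k) W} (h : ∀ i ∈ s, M i ∈ T.pos k) :
    ∑ i ∈ s, M i ∈ T.pos k :=
  Finset.sum_induction _ _ (fun _ _ => T.pos_add) (T.zero_mem_pos k) h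

theorem osCP_zero : osCP S.pos T.pos 0 := fun k _ _ => T.zero_mem_pos k

theorem osCP_add {φ ψ : V →ₗ[ℂ] W} (hφ : osCP S.pos T.pos φ) (hψ : osCP S.pos T.pos ψ) :
    osCP S.pos T.pos (φ + ψ) := fun k M hM => T.pos_add (hφ k M hM) (hψ k M hM)

theorem osCP_sum {ι : Type*} (s : Finset ι) {φ : ι → V →ₗ[ℂ] W}
    (h : ∀ i ∈ s, osCP S.pos T.pos (φ i)) : osCP S.pos T.pos (∑ i ∈ s, φ i) :=
  Finset.sum_induction _ (osCP S.pos T.pos) (fun _ _ => osCP_add) osCP_zero h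

theorem osCP_smul {t : ℝ} (ht : 0 ≤ t) {φ : V →ₗ[ℂ] W} (hφ : osCP S.pos T.pos φ) :
    osCP S.pos T.pos ((t : ℂ) • φ) := fun k M hM => T.pos_smul t ht (hφ k M hM)

theorem posElem_map_of_osCP {φ : V →ₗ[ℂ] W} (hφ : osCP S.pos T.pos φ) {v : V}
    (hv : posElem S.pos v) : posElem T.pos (φ v) :=
  hφ 1 _ hv

theorem OSStruct.posSemidef_map {f : Dual ℂ V} (hf : ∀ v, posElem S.pos v → 0 ≤ f v)
    {k : ℕ} {M : Matrix (Fin k) (Fin k) V} (hM : M ∈ S.pos k) : (M.map f).PosSemidef := by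
  refine .of_dotProduct_mulVec_nonneg ?_ fun x => ?_
  · ext i j
    rw [Matrix.conjTranspose_apply, Matrix.map_apply, Matrix.map_apply, Complex.star_def,
      ← OSStruct.map_star_eq_conj hf, ← Matrix.conjTranspose_apply, S.pos_sa hM]
  · convert hf _ (S.mem_pos_one_iff.1 (S.pos_congr (Matrix.of fun i (_ : Fin 1) => x i) hM))
      using 1
    simp [matCongr, dotProduct, Matrix.mulVec, Finset.mul_sum, map_sum, mul_assoc, mul_comm,
      mul_left_comm]

theorem osCP_smulRight {f : Dual ℂ V} (hf : ∀ v, posElem S.pos v → 0 ≤ f v) {w : W}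
    (hw : posElem T.pos w) : osCP S.pos T.pos (f.smulRight w) := by
  intro k M hM
  obtain ⟨m, u, hu⟩ := Matrix.posSemidef_iff_eq_sum_vecMulVec.1 (S.posSemidef_map hf hM)
  have : mmap (f.smulRight w) M = ∑ r, matCongr (Matrix.of fun (_ : Fin 1) j => star (u r j))
      (Matrix.of fun _ _ => w) := by
    ext i j
    have hij := congrFun₂ hu i j
    simp only [Matrix.map_apply, Matrix.sum_apply, Matrix.vecMulVec_apply, Pi.star_apply]
      at hij
    simp [mmap, matCongr, Matrix.sum_apply, hij, Finset.sum_smul]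
  rw [this]
  exact T.sum_mem_pos _ fun r _ => T.pos_congr _ hw

end CompletelyPositive

section Construction

variable {V W : Type*} [AddCommGroup V] [Module ℂ V] [StarAddMonoid V] [StarModule ℂ V]
  [AddCommGroup W] [Module ℂ W] [StarAddMonoid W] [StarModule ℂ W]
  [FiniteDimensional ℂ V] [FiniteDimensional ℂ W] (S : OSStruct V) (T : OSStruct W)

theorem exists_osCP_injective (h : finrank ℂ V = finrank ℂ W) :
    ∃ φ : V →ₗ[ℂ] W, osCP S.pos T.pos φ ∧ Function.Injective φ := by
  obtain ⟨bV, hbV⟩ := Basis.exists_forall_mem_of_span_eq_top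
    (Subspace.dual_finrank_eq.trans h) S.span_states_eq_top
  obtain ⟨bW, hbW⟩ := Basis.exists_forall_mem_of_span_eq_top rfl T.span_posElem_eq_top
  exact ⟨∑ i, (bV i).smulRight (bW i), osCP_sum _ fun i _ => osCP_smulRight (hbV i).2 (hbW i),
    LinearMap.injective_sum_smulRight bV bW.linearIndependent⟩

theorem exists_osCP_injective_posElem_unit_sub (h : finrank ℂ V = finrank ℂ W) :
    ∃ φ : V →ₗ[ℂ] W, osCP S.pos T.pos φ ∧ Function.Injective φ ∧
      posElem T.pos (T.unit - φ S.unit) := by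
  obtain ⟨φ, hφ, hinj⟩ := exists_osCP_injective S T h
  obtain ⟨r, hr, hre⟩ := OSStruct.exists_posElem_smul_unit_add (S := T)
    (OSStruct.isSelfAdjoint_of_posElem (posElem_map_of_osCP hφ S.posElem_unit)).neg
  refine ⟨((r⁻¹ : ℝ) : ℂ) • φ, osCP_smul (inv_nonneg.2 hr.le) hφ,
    fun v w hvw => hinj (smul_right_injective W (by simpa using hr.ne') hvw), ?_⟩
  convert OSStruct.posElem_smul (inv_nonneg.2 hr.le) hre using 1
  rw [LinearMap.smul_apply, Complex.coe_smul, smul_add, smul_smul, inv_mul_cancel₀ hr.ne',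
    one_smul, smul_neg, sub_eq_add_neg]

end Construction

/-- Any two finite dimensional operator systems of the same dimension
admit a surjective ucp map between them. -/
theorem statement13 {V W : Type} [AddCommGroup V] [Module ℂ V] [StarAddMonoid V] [StarModule ℂ V] [AddCommGroup W] [Module ℂ W] [StarAddMonoid W] [StarModule ℂ W]
    [FiniteDimensional ℂ V] [FiniteDimensional ℂ W]
    (S : OSStruct V) (T : OSStruct W) (n : ℕ)
    (hV : Module.finrank ℂ V = n) (hW : Module.finrank ℂ W = n) :
    ∃ φ : V →ₗ[ℂ] W, osUCP S.pos S.unit T.pos T.unit φ ∧ Function.Surjective φ := by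
  rcases subsingleton_or_nontrivial W with _ | _
  · refine ⟨0, ⟨fun k M _ => ?_, Subsingleton.elim _ _⟩, fun w => ⟨0, Subsingleton.elim _ _⟩⟩
    rw [Subsingleton.elim (mmap 0 M) (unitMat T.unit k)]
    exact T.unit_pos k
  have hdim : finrank ℂ V = finrank ℂ W := hV.trans hW.symm
  obtain ⟨ψ, hψ, hψinj, hψe⟩ := exists_osCP_injective_posElem_unit_sub S T hdim
  obtain ⟨y, hy⟩ := (LinearMap.injective_iff_surjective_of_finrank_eq_finrank hdim).1 hψinj T.unit
  obtain ⟨f, hf, hfy⟩ := S.exists_state_apply_ne_zero (v := y) <| by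
    rintro rfl
    exact T.unit_ne_zero (by simpa using hy.symm)
  have hφinj : Function.Injective (ψ + f.smulRight (T.unit - ψ S.unit)) := by
    rw [← hy, ← map_sub]
    exact LinearMap.injective_add_smulRight hψinj (by rwa [map_sub, hf.1, add_sub_cancel])
  refine ⟨_, ⟨osCP_add hψ (osCP_smulRight hf.2 hψe), by simp [hf.1]⟩,
    (LinearMap.injective_iff_surjective_of_finrank_eq_finrank hdim).1 hφinj⟩
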